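/- For every HyperLTL sentence φ over the alphabet {x,y} that lies in the class 2^𝔾, the set {T : T ⊨_H φ} is not equal to the set of all sets T of infinite traces over {x,y} in which x and y are point independent. -/

import Mathlib

/-- LTL formulas over an alphabet `A`. -/
inductive LTL (A : Type) : Type where
  | atom : A → LTL A
  | not  : LTL A → LTL A
  | or   : LTL A → LTL A → LTL A
  | next : LTL A → LTL A
  | untl : LTL A → LTL A → LTL A

/-- LTL satisfaction over an infinite trace. -/
def LTL.Sat {A : Type} : (ℕ → A → Bool) → LTL A → Prop
  | τ, .atom a   => τ 0 a = true
  | τ, .not φ    => ¬ LTL.Sat τ φ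
  | τ, .or φ ψ   => LTL.Sat τ φ ∨ LTL.Sat τ ψ
  | τ, .next φ   => LTL.Sat (fun n => τ (n + 1)) φ
  | τ, .untl φ ψ => ∃ j, LTL.Sat (fun n => τ (n + j)) ψ ∧
      ∀ j' < j, LTL.Sat (fun n => τ (n + j')) φ

/-- HyperLTL formulas over alphabet `X`, trace variables are natural numbers;
the quantifier-free part is an LTL formula over atoms `a_π = (a, π)`. -/
inductive HyperLTL (X : Type) : Type where
  | ex  : ℕ → HyperLTL X → HyperLTL X
  | all : ℕ → HyperLTL X → HyperLTL X
  | qf  : LTL (X × ℕ) → HyperLTL X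

/-- HyperLTL satisfaction of a quantifier-free formula by a partial trace
assignment over `T` at time `i`. -/
def HSatQF {X : Type} {T : Set (ℕ → X → Bool)} (Θ : ℕ → Option ↥T) : ℕ → LTL (X × ℕ) → Prop
  | i, .atom p   => ∃ τ : ↥T, Θ p.2 = some τ ∧ τ.1 i p.1 = true
  | i, .not φ    => ¬ HSatQF Θ i φ
  | i, .or φ ψ   => HSatQF Θ i φ ∨ HSatQF Θ i ψ
  | i, .next φ   => HSatQF Θ (i + 1) φ
  | i, .untl φ ψ => ∃ j, i ≤ j ∧ HSatQF Θ j ψ ∧ ∀ j', i ≤ j' → j' < j → HSatQF Θ j' φ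

/-- HyperLTL satisfaction: quantifiers range over `T`. -/
def HSat {X : Type} {T : Set (ℕ → X → Bool)} : (ℕ → Option ↥T) → ℕ → HyperLTL X → Prop
  | Θ, i, .ex π ψ  => ∃ τ : ↥T, HSat (Function.update Θ π (some τ)) i ψ
  | Θ, i, .all π ψ => ∀ τ : ↥T, HSat (Function.update Θ π (some τ)) i ψ
  | Θ, i, .qf φ    => HSatQF Θ i φ

/-- `T ⊨_H ψ` : satisfaction from the empty trace assignment at time 0. -/
def HModels {X : Type} (T : Set (ℕ → X → Bool)) (ψ : HyperLTL X) : Prop :=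
  HSat (T := T) (fun _ => none) 0 ψ

/-- Trace variables occurring in a quantifier-free HyperLTL formula. -/
def LTL.tvars {X : Type} : LTL (X × ℕ) → Finset ℕ
  | .atom p   => {p.2}
  | .not φ    => φ.tvars
  | .or φ ψ   => φ.tvars ∪ ψ.tvars
  | .next φ   => φ.tvars
  | .untl φ ψ => φ.tvars ∪ ψ.tvars

/-- Free trace variables of a HyperLTL formula. -/
def HyperLTL.free {X : Type} : HyperLTL X → Finset ℕ
  | .ex π ψ  => ψ.free.erase π
  | .all π ψ => ψ.free.erase π
  | .qf φ    => φ.tvars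

/-- A HyperLTL sentence has no free trace variables. -/
def HyperLTL.Closed {X : Type} (ψ : HyperLTL X) : Prop := ψ.free = ∅

/-- Propositional LTL formulas: no temporal operators. -/
def LTL.Propositional {A : Type} : LTL A → Prop
  | .atom _   => True
  | .not φ    => φ.Propositional
  | .or φ ψ   => φ.Propositional ∧ ψ.Propositional
  | .next _   => False
  | .untl _ _ => False

/-- A tautology `⊤` (written `a ∨ ¬a` for an atom `a`). -/
def ltlTop {A : Type} (a : A) : LTL A := .or (.atom a) (.not (.atom a))

/-- `G φ`, abbreviating `¬(⊤ U ¬φ)`. -/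
def ltlG {A : Type} (a : A) (φ : LTL A) : LTL A := .not (.untl (ltlTop a) (.not φ))

/-- The class `𝔾` of LTL formulas `G ψ` with `ψ` propositional. -/
def GClass (A : Type) : Set (LTL A) := {φ | ∃ a ψ, LTL.Propositional ψ ∧ φ = ltlG a ψ}

/-- The alphabet `{x, y}`. -/
inductive XY : Type where
  | x : XY
  | y : XY
deriving DecidableEq

/-- The valuation with `x ↦ b₁`, `y ↦ b₂`. -/
def vXY (b₁ b₂ : Bool) : XY → Bool
  | .x => b₁
  | .y => b₂


/-- A HyperLTL formula lies in the class `2^𝔾` iff its quantifier-free part, read as an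
LTL formula over the alphabet `X × ℕ`, belongs to `𝔾`. -/
def HyperLTL.InG {X : Type} : HyperLTL X → Prop
  | .ex _ ψ  => ψ.InG
  | .all _ ψ => ψ.InG
  | .qf φ    => φ ∈ GClass (X × ℕ)

/-- `x` and `y` are point independent in `T`. -/
def PointIndep (u w : XY) (T : Set (ℕ → XY → Bool)) : Prop :=
  ∀ i : ℕ, ∀ τ ∈ T, ∀ τ' ∈ T, ∃ τ'' ∈ T, τ'' i u = τ i u ∧ τ'' i w = τ' i w

/-!
Let `A` (`spikeTraces`) consist of the traces where `x` is constantly `c` and `y` is constantly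
`¬c` except at a single time `m`, where `y = c`; let `B ⊆ A` (`lateSpikeTraces`) be those with
`m > 0`. At every time, `A` realizes all four valuations of `(x, y)`, so `x` and `y` are point
independent in `A`; at time `0` every trace of `B` has `y = ¬x`, so they are not in `B`.

Yet every `2^𝔾` sentence true on `A` is true on `B`. Delaying a trace of `A` by one step (and
prepending `(c, ¬c)`) maps `A` onto `B`, and any finitely many traces of `A` look at some common
time exactly as their delays look at any given time: at time `k + 1` take `k`, at time `0` take a
time beyond all their spikes. Since a `2^𝔾` sentence only asks that a propositional formula hold
at every time, for traces chosen along the quantifier prefix, it is preserved by such a map.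
-/

section Transfer

variable {X : Type} {T T' : Set (ℕ → X → Bool)}

theorem HSatQF.iff_of_propositional (Θ : ℕ → Option T) (Θ' : ℕ → Option T') {i i' : ℕ}
    {ψ : LTL (X × ℕ)} (hψ : ψ.Propositional)
    (h : ∀ p : X × ℕ, p.2 ∈ ψ.tvars → (HSatQF Θ i (.atom p) ↔ HSatQF Θ' i' (.atom p))) :
    HSatQF Θ i ψ ↔ HSatQF Θ' i' ψ := by
  induction ψ with
  | atom p => exact h p (Finset.mem_singleton_self _)
  | not ψ ih => exact not_congr (ih hψ h)
  | or ψ χ ihψ ihχ =>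
    exact or_congr (ihψ hψ.1 fun p hp => h p (Finset.mem_union_left _ hp))
      (ihχ hψ.2 fun p hp => h p (Finset.mem_union_right _ hp))
  | next => exact hψ.elim
  | untl => exact hψ.elim

theorem hSatQF_ltlTop (Θ : ℕ → Option T) (i : ℕ) (a : X × ℕ) : HSatQF Θ i (ltlTop a) :=
  em _

theorem hSatQF_ltlG_zero_iff (Θ : ℕ → Option T) (a : X × ℕ) (ψ : LTL (X × ℕ)) :
    HSatQF Θ 0 (ltlG a ψ) ↔ ∀ j, HSatQF Θ j ψ :=
  ⟨fun h j => by_contra fun hj => h ⟨j, j.zero_le, hj, fun j' _ _ => hSatQF_ltlTop Θ j' a⟩,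
    fun h ⟨j, _, hj, _⟩ => hj (h j)⟩

theorem hSatQF_atom_map_iff (e : T → T') (Θ : ℕ → Option T) {j j' : ℕ} {p : X × ℕ}
    (h : ∀ τ, Θ p.2 = some τ → (e τ).1 j' = τ.1 j) :
    HSatQF (Option.map e ∘ Θ) j' (.atom p) ↔ HSatQF Θ j (.atom p) := by
  cases hΘ : Θ p.2 with
  | none => simp [HSatQF, hΘ]
  | some τ => simp [HSatQF, hΘ, h τ hΘ]

theorem HyperLTL.InG.hSat_map (e : T → T') (he : Function.Surjective e)
    (hsnap : ∀ (S : Finset T) (j' : ℕ), ∃ j, ∀ τ ∈ S, τ.1 j = (e τ).1 j')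
    {χ : HyperLTL X} (hχ : χ.InG) (Θ : ℕ → Option T) (h : HSat Θ 0 χ) :
    HSat (Option.map e ∘ Θ) 0 χ := by
  induction χ generalizing Θ with
  | ex π χ ih =>
    obtain ⟨τ, hτ⟩ := h
    refine ⟨e τ, ?_⟩
    have := ih hχ _ hτ
    rwa [Function.comp_update] at this
  | all π χ ih =>
    intro τ'
    obtain ⟨τ, rfl⟩ := he τ'
    have := ih hχ _ (h τ)
    rwa [Function.comp_update] at this
  | qf φ =>
    classical
    obtain ⟨a, ψ, hψ, rfl⟩ := hχ
    change HSatQF _ 0 _ at h ⊢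
    rw [hSatQF_ltlG_zero_iff] at h ⊢
    intro j'
    obtain ⟨j, hj⟩ := hsnap (ψ.tvars.biUnion fun π => (Θ π).toFinset) j'
    refine (HSatQF.iff_of_propositional Θ _ hψ fun p hp => ?_).1 (h j)
    refine (hSatQF_atom_map_iff e Θ fun τ hτ => (hj τ ?_).symm).symm
    exact Finset.mem_biUnion.2 ⟨p.2, hp, Option.mem_toFinset.2 hτ⟩

theorem HyperLTL.InG.hModels_of_surjective (e : T → T') (he : Function.Surjective e)
    (hsnap : ∀ (S : Finset T) (j' : ℕ), ∃ j, ∀ τ ∈ S, τ.1 j = (e τ).1 j')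
    {χ : HyperLTL X} (hχ : χ.InG) (h : HModels T χ) : HModels T' χ :=
  hχ.hSat_map e he hsnap _ h

end Transfer

def spikeTrace (c : Bool) (m : ℕ) : ℕ → XY → Bool :=
  fun i => vXY c (if i = m then c else !c)

def spikeTraces : Set (ℕ → XY → Bool) := {τ | ∃ c m, τ = spikeTrace c m}

def lateSpikeTraces : Set (ℕ → XY → Bool) := {τ | ∃ c m, τ = spikeTrace c (m + 1)}

def delay (τ : ℕ → XY → Bool) : ℕ → XY → Bool
  | 0 => vXY (τ 0 .x) (!τ 0 .x)
  | k + 1 => τ k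

theorem delay_spikeTrace (c : Bool) (m : ℕ) : delay (spikeTrace c m) = spikeTrace c (m + 1) := by
  funext i
  cases i <;> simp [delay, spikeTrace, vXY]

theorem mapsTo_delay_spikeTraces : Set.MapsTo delay spikeTraces lateSpikeTraces := by
  rintro _ ⟨c, m, rfl⟩
  exact ⟨c, m, delay_spikeTrace c m⟩

theorem surjective_restrict_delay : Function.Surjective mapsTo_delay_spikeTraces.restrict := by
  rintro ⟨_, c, m, rfl⟩
  exact ⟨⟨spikeTrace c m, c, m, rfl⟩, Subtype.ext (delay_spikeTrace c m)⟩

theorem exists_spikeTrace_apply_eq (c b : Bool) (i : ℕ) : ∃ m, spikeTrace c m i = vXY c b := by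
  by_cases hb : b = c
  · exact ⟨i, by simp [spikeTrace, hb]⟩
  · exact ⟨i + 1, by simp [spikeTrace, Bool.eq_not_iff.2 hb]⟩

theorem spikeTraces_pointIndep : PointIndep XY.x XY.y spikeTraces := by
  rintro i _ ⟨c, m, rfl⟩ τ' -
  obtain ⟨m', hm'⟩ := exists_spikeTrace_apply_eq c (τ' i .y) i
  exact ⟨_, ⟨c, m', rfl⟩, by rw [hm']; exact ⟨rfl, rfl⟩⟩

theorem not_pointIndep_lateSpikeTraces : ¬ PointIndep XY.x XY.y lateSpikeTraces := by
  intro h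
  obtain ⟨_, ⟨c, m, rfl⟩, hx, hy⟩ := h 0 _ ⟨true, 0, rfl⟩ _ ⟨false, 0, rfl⟩
  simp_all [spikeTrace, vXY]

theorem exists_spikeTraces_eq_delay (S : Finset spikeTraces) (j' : ℕ) :
    ∃ j, ∀ τ ∈ S, τ.1 j = delay τ.1 j' := by
  cases j' with
  | succ k => exact ⟨k, fun _ _ => rfl⟩
  | zero =>
    choose c m hτ using fun τ : spikeTraces => τ.2
    refine ⟨S.sup m + 1, fun τ hτS => ?_⟩
    have hm : S.sup m + 1 ≠ m τ := by have := S.le_sup (f := m) hτS; omega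
    rw [hτ τ, delay_spikeTrace]
    simp [spikeTrace, hm]

theorem no_globallyHyperLTL_for_pointIndependence_general
    (φ : HyperLTL XY) (hg : φ.InG) :
    {T : Set (ℕ → XY → Bool) | HModels T φ} ≠ {T | PointIndep XY.x XY.y T} := by
  intro h
  have hA : HModels spikeTraces φ := (Set.ext_iff.1 h _).2 spikeTraces_pointIndep
  have hB : HModels lateSpikeTraces φ :=
    hg.hModels_of_surjective _ surjective_restrict_delay exists_spikeTraces_eq_delay hA
  exact not_pointIndep_lateSpikeTraces ((Set.ext_iff.1 h _).1 hB)

/-- No HyperLTL sentence over `{x,y}` in the class `2^𝔾` generates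
exactly the sets of infinite traces in which `x` and `y` are point independent. -/
theorem no_globallyHyperLTL_for_pointIndependence
    (φ : HyperLTL XY) (hc : φ.Closed) (hg : φ.InG) :
    {T : Set (ℕ → XY → Bool) | HModels T φ} ≠ {T | PointIndep XY.x XY.y T} :=
  no_globallyHyperLTL_for_pointIndependence_general φ hg
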